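/- For pairwise distinct complex numbers a_1,…,a_N and b_1,…,b_N: Σ_{ℓ(λ)≤N} (1/(N)_λ) s_λ(a) s_λ(b) = (∏_{k=1}^{N-1} k!) · det(e^{a_i b_j})_{1≤i,j≤N} / (Δ(a)Δ(b)), where (N)_λ = ∏_{(i,j)∈λ}(N-i+j) and Δ is the Vandermonde determinant. -/

import Mathlib

/-!
Expanding every entry `exp (a i * b j)` into its power series turns `det (exp (a i * b j))` into
a sum over exponent tuples `m : Fin N → ℕ` of `(∏ i, b i ^ m i / (m i)!) * det (a i ^ m j)`.
Only injective `m` contribute; writing such an `m` as a strictly decreasing `μ` composed with a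
permutation and summing over the permutation gives `∑ μ, det (a ^ μ) det (b ^ μ) / ∏ j, (μ j)!`,
an infinite Cauchy–Binet formula. With `μ = λ + (N - 1, …, 1, 0)`, row `i` of the Pochhammer
symbol is `(λ i + N - 1 - i)! / (N - 1 - i)!`, which produces the factor `∏ k < N, k!`.
-/

open Finset Matrix

section FinPiSeries

variable {ι R : Type*}

lemma prod_consEquiv_apply {M : Type*} [CommMonoid M] {n : ℕ} (f : Fin (n + 1) → ι → M)
    (p : ι × (Fin n → ι)) :
    ∏ j, f j (Fin.consEquiv (fun _ => ι) p j) = f 0 p.1 * ∏ j, f j.succ (p.2 j) := by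
  simp [Fin.prod_univ_succ, Fin.consEquiv]

theorem summable_fin_pi_prod_of_nonneg {n : ℕ} (f : Fin n → ι → ℝ) (hf₀ : ∀ j k, 0 ≤ f j k)
    (hf : ∀ j, Summable (f j)) : Summable fun m : Fin n → ι => ∏ j, f j (m j) := by
  induction n with
  | zero => exact .of_finite
  | succ n ih =>
    rw [← (Fin.consEquiv fun _ => ι).summable_iff]
    refine ((hf 0).mul_of_nonneg (ih _ (fun j => hf₀ j.succ) fun j => hf j.succ)
      (hf₀ 0) fun m => prod_nonneg fun j _ => hf₀ j.succ (m j)).congr fun p => ?_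
    exact (prod_consEquiv_apply f p).symm

variable [NormedCommRing R] [NormOneClass R]

theorem summable_norm_fin_pi_prod {n : ℕ} (f : Fin n → ι → R)
    (hf : ∀ j, Summable fun k => ‖f j k‖) : Summable fun m : Fin n → ι => ‖∏ j, f j (m j)‖ :=
  (summable_fin_pi_prod_of_nonneg _ (fun _ _ => norm_nonneg _) hf).of_nonneg_of_le
    (fun _ => norm_nonneg _) fun _ => norm_prod_le _ _

theorem tsum_fin_pi_prod [CompleteSpace R] {n : ℕ} (f : Fin n → ι → R)
    (hf : ∀ j, Summable fun k => ‖f j k‖) :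
    ∑' m : Fin n → ι, ∏ j, f j (m j) = ∏ j, ∑' k, f j k := by
  induction n with
  | zero => simp
  | succ n ih =>
    rw [← (Fin.consEquiv fun _ => ι).tsum_eq, tsum_congr (prod_consEquiv_apply f),
      ← tsum_mul_tsum_of_summable_norm (hf 0) (summable_norm_fin_pi_prod _ fun j => hf j.succ),
      ih _ fun j => hf j.succ, Fin.prod_univ_succ]

end FinPiSeries

section DetExp

variable {N : ℕ} (a b : Fin N → ℂ)

lemma summable_norm_pow_div_factorial (z : ℂ) :
    Summable fun n : ℕ => ‖z ^ n / (n.factorial : ℂ)‖ := by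
  simpa [norm_div, norm_pow] using Real.summable_pow_div_factorial ‖z‖

noncomputable def detExpTerm (m : Fin N → ℕ) : ℂ :=
  (∏ i, b i ^ m i / ((m i).factorial : ℂ)) * det (of fun i j => a i ^ m j)

lemma detExpTerm_eq_sum_perm (m : Fin N → ℕ) :
    detExpTerm a b m = ∑ σ : Equiv.Perm (Fin N),
      (Equiv.Perm.sign σ : ℂ) * ∏ i, (a (σ i) * b i) ^ m i / ((m i).factorial : ℂ) := by
  rw [detExpTerm, det_apply', mul_sum]
  refine sum_congr rfl fun σ _ => ?_
  simp only [of_apply, mul_pow, mul_div_assoc, prod_mul_distrib]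
  ring

lemma summable_perm_term (σ : Equiv.Perm (Fin N)) :
    Summable fun m : Fin N → ℕ => ∏ i, (a (σ i) * b i) ^ m i / ((m i).factorial : ℂ) :=
  (summable_norm_fin_pi_prod _ fun _ => summable_norm_pow_div_factorial _).of_norm

lemma summable_detExpTerm : Summable (detExpTerm a b) := by
  simp_rw [funext (detExpTerm_eq_sum_perm a b)]
  exact summable_sum fun σ _ => (summable_perm_term a b σ).mul_left _

theorem det_exp_eq_tsum_detExpTerm :
    det (of fun i j => Complex.exp (a i * b j)) = ∑' m, detExpTerm a b m := by
  simp_rw [detExpTerm_eq_sum_perm]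
  rw [det_apply', Summable.tsum_finsetSum fun σ _ => (summable_perm_term a b σ).mul_left _]
  refine sum_congr rfl fun σ _ => ?_
  simp only [of_apply, Complex.exp_eq_exp_ℂ, NormedSpace.exp_eq_tsum_div]
  rw [tsum_mul_left, tsum_fin_pi_prod _ fun _ => summable_norm_pow_div_factorial _]

lemma detExpTerm_eq_zero_of_not_injective {m : Fin N → ℕ} (hm : ¬ Function.Injective m) :
    detExpTerm a b m = 0 := by
  obtain ⟨i, j, hmij, hij⟩ := Function.not_injective_iff.mp hm
  rw [detExpTerm, det_zero_of_column_eq hij fun k => by simp [hmij], mul_zero]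

lemma sum_perm_detExpTerm_comp (μ : Fin N → ℕ) :
    ∑ σ : Equiv.Perm (Fin N), detExpTerm a b (μ ∘ σ) =
      (∏ j, ((μ j).factorial : ℂ))⁻¹ * det (of fun i j => a i ^ μ j) *
        det (of fun i j => b i ^ μ j) := by
  have hB : det (of fun i j => b i ^ μ j) =
      ∑ σ : Equiv.Perm (Fin N), (Equiv.Perm.sign σ : ℂ) * ∏ i, b i ^ μ (σ i) := by
    rw [← det_transpose, det_apply']
    simp
  have hterm (σ : Equiv.Perm (Fin N)) : detExpTerm a b (μ ∘ σ) =
      (∏ j, ((μ j).factorial : ℂ))⁻¹ * det (of fun i j => a i ^ μ j) *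
        ((Equiv.Perm.sign σ : ℂ) * ∏ i, b i ^ μ (σ i)) := by
    rw [detExpTerm, show (of fun i j => a i ^ (μ ∘ σ) j) = (of fun i j => a i ^ μ j).submatrix id σ
      from rfl, det_permute', ← Equiv.prod_comp σ fun j => ((μ j).factorial : ℂ)]
    simp only [Function.comp_apply, div_eq_mul_inv, prod_mul_distrib, prod_inv_distrib]
    ring
  simp_rw [hterm, ← mul_sum, hB]

end DetExp

section StrictAntiDecomposition

variable {N : ℕ}

lemma strictAnti_comp_perm_injective :
    Function.Injective fun p : {μ : Fin N → ℕ // StrictAnti μ} × Equiv.Perm (Fin N) =>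
      p.1.1 ∘ p.2 := by
  rintro ⟨⟨μ, hμ⟩, σ⟩ ⟨⟨ν, hν⟩, τ⟩ h
  have hμν : μ = ν := (hμ.range_inj hν).mp <| by
    simpa [Set.range_comp] using congrArg Set.range h
  subst hμν
  obtain rfl : σ = τ := Equiv.ext fun i => hμ.injective (congrFun h i)
  rfl

lemma exists_strictAnti_comp_perm {m : Fin N → ℕ} (hm : Function.Injective m) :
    ∃ μ : Fin N → ℕ, StrictAnti μ ∧ ∃ σ : Equiv.Perm (Fin N), μ ∘ σ = m := by
  set τ := Tuple.sort m * Fin.revPerm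
  refine ⟨m ∘ τ, ?_, τ⁻¹, by ext; simp⟩
  exact ((Tuple.monotone_sort m).comp_antitone Fin.rev_anti).strictAnti_of_injective
    (hm.comp τ.injective)

end StrictAntiDecomposition

theorem det_exp_eq_tsum_strictAnti {N : ℕ} (a b : Fin N → ℂ) :
    det (of fun i j => Complex.exp (a i * b j)) =
      ∑' μ : {μ : Fin N → ℕ // StrictAnti μ}, (∏ j, ((μ.1 j).factorial : ℂ))⁻¹ *
        det (of fun i j => a i ^ μ.1 j) * det (of fun i j => b i ^ μ.1 j) := by
  have hsupp : Function.support (detExpTerm a b) ⊆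
      Set.range fun p : {μ : Fin N → ℕ // StrictAnti μ} × Equiv.Perm (Fin N) => p.1.1 ∘ p.2 := by
    intro m hm
    obtain ⟨μ, hμ, σ, rfl⟩ := exists_strictAnti_comp_perm <| not_not.mp
      (mt (detExpTerm_eq_zero_of_not_injective a b) hm)
    exact ⟨(⟨μ, hμ⟩, σ), rfl⟩
  have hsumm : Summable fun p : {μ : Fin N → ℕ // StrictAnti μ} × Equiv.Perm (Fin N) =>
      detExpTerm a b (p.1.1 ∘ p.2) :=
    (summable_detExpTerm a b).comp_injective strictAnti_comp_perm_injective
  rw [det_exp_eq_tsum_detExpTerm, ← strictAnti_comp_perm_injective.tsum_eq hsupp,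
    hsumm.tsum_prod' fun _ => .of_finite]
  exact tsum_congr fun μ => by rw [tsum_fintype]; exact sum_perm_detExpTerm_comp a b μ.1

section Staircase

lemma antitone_add_val_of_strictAnti :
    ∀ {N : ℕ} {μ : Fin N → ℕ}, StrictAnti μ → Antitone fun j : Fin N => μ j + j
  | 0, _, _ => fun j => j.elim0
  | _ + 1, μ, hμ => Fin.antitone_iff_succ_le.mpr fun i => by
      have := hμ (Fin.castSucc_lt_succ (i := i))
      simp only [Fin.val_succ, Fin.val_castSucc]
      omega

lemma sub_one_sub_le_of_strictAnti {N : ℕ} {μ : Fin N → ℕ} (hμ : StrictAnti μ) (j : Fin N) :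
    N - 1 - j ≤ μ j := by
  obtain ⟨n, rfl⟩ : ∃ n, N = n + 1 := ⟨N - 1, by have := j.isLt; omega⟩
  have := antitone_add_val_of_strictAnti hμ (Fin.le_last j)
  simp only [Fin.val_last] at this
  omega

def antitoneEquivStrictAnti (N : ℕ) :
    {f : Fin N → ℕ // Antitone f} ≃ {f : Fin N → ℕ // StrictAnti f} where
  toFun lam := ⟨fun j => lam.1 j + (N - 1 - j), fun j k hjk => by
    have := lam.2 hjk.le
    have : (j : ℕ) < k := hjk
    have := k.isLt
    dsimp only at *
    omega⟩
  invFun μ := ⟨fun j => μ.1 j - (N - 1 - j), fun j k hjk => by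
    have := antitone_add_val_of_strictAnti μ.2 hjk
    have : (j : ℕ) ≤ k := hjk
    have := k.isLt
    dsimp only at *
    omega⟩
  left_inv lam := by ext; simp
  right_inv μ := by ext j; have := sub_one_sub_le_of_strictAnti μ.2 j; simp; omega

end Staircase

lemma factorial_mul_prod_range_add_sub {N i : ℕ} (hi : i < N) (L : ℕ) :
    ((N - 1 - i).factorial : ℂ) * ∏ j ∈ range L, ((N : ℂ) + j - i) =
      ((L + (N - 1 - i)).factorial : ℂ) := by
  obtain ⟨c, rfl⟩ : ∃ c, N = i + 1 + c := ⟨N - (i + 1), by omega⟩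
  have hc : i + 1 + c - 1 - i = c := by omega
  have hrow (j : ℕ) : ((i + 1 + c : ℕ) : ℂ) + j - i = ((c + 1 + j : ℕ) : ℂ) := by
    push_cast; ring
  rw [hc, prod_congr rfl fun j _ => hrow j, ← Nat.cast_prod, ← Nat.ascFactorial_eq_prod_range,
    ← Nat.cast_mul, Nat.factorial_mul_ascFactorial, add_comm]

lemma prod_prod_range_add_sub_mul_prod_factorial {N : ℕ} (lam : Fin N → ℕ) :
    (∏ i : Fin N, ∏ j ∈ range (lam i), ((N : ℂ) + j - i)) * ∏ k ∈ range N, (k.factorial : ℂ) =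
      ∏ i : Fin N, ((lam i + (N - 1 - i)).factorial : ℂ) := by
  rw [← prod_range_reflect, ← Fin.prod_univ_eq_prod_range (fun k => ((N - 1 - k).factorial : ℂ)),
    ← prod_mul_distrib]
  exact prod_congr rfl fun i _ => by rw [mul_comm, factorial_mul_prod_range_add_sub i.isLt]

theorem stmt6_general (N : ℕ) (a b : Fin N → ℂ) :
    (∑' lam : {f : Fin N → ℕ // Antitone f},
        (∏ i : Fin N, ∏ j ∈ range (lam.1 i), ((N : ℂ) + (j : ℂ) - ((i : ℕ) : ℂ)))⁻¹ *
          (Matrix.det (Matrix.of fun i j : Fin N => a i ^ (lam.1 j + (N - 1 - (j : ℕ)))) /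
            ∏ i : Fin N, ∏ j ∈ Finset.univ.filter (fun j => i < j), (a i - a j)) *
          (Matrix.det (Matrix.of fun i j : Fin N => b i ^ (lam.1 j + (N - 1 - (j : ℕ)))) /
            ∏ i : Fin N, ∏ j ∈ Finset.univ.filter (fun j => i < j), (b i - b j))) =
      (∏ k ∈ range N, (Nat.factorial k : ℂ)) *
        Matrix.det (Matrix.of fun i j : Fin N => Complex.exp (a i * b j)) /
        ((∏ i : Fin N, ∏ j ∈ Finset.univ.filter (fun j => i < j), (a i - a j)) *
          ∏ i : Fin N, ∏ j ∈ Finset.univ.filter (fun j => i < j), (b i - b j)) := by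
  set Δa := ∏ i : Fin N, ∏ j ∈ Finset.univ.filter (fun j => i < j), (a i - a j)
  set Δb := ∏ i : Fin N, ∏ j ∈ Finset.univ.filter (fun j => i < j), (b i - b j)
  set C := ∏ k ∈ range N, (Nat.factorial k : ℂ)
  have hC : C ≠ 0 := prod_ne_zero_iff.mpr fun k _ => Nat.cast_ne_zero.mpr k.factorial_ne_zero
  have hterm (lam : {f : Fin N → ℕ // Antitone f}) :
      (∏ i : Fin N, ∏ j ∈ range (lam.1 i), ((N : ℂ) + j - i))⁻¹ *
          (det (of fun i j : Fin N => a i ^ (lam.1 j + (N - 1 - j))) / Δa) *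
          (det (of fun i j : Fin N => b i ^ (lam.1 j + (N - 1 - j))) / Δb) =
        C / (Δa * Δb) * ((∏ j, (((antitoneEquivStrictAnti N lam).1 j).factorial : ℂ))⁻¹ *
          det (of fun i j => a i ^ (antitoneEquivStrictAnti N lam).1 j) *
          det (of fun i j => b i ^ (antitoneEquivStrictAnti N lam).1 j)) := by
    rw [eq_div_of_mul_eq hC (prod_prod_range_add_sub_mul_prod_factorial lam.1), inv_div]
    simp only [antitoneEquivStrictAnti, Equiv.coe_fn_mk]
    ring
  rw [tsum_congr hterm, tsum_mul_left, (antitoneEquivStrictAnti N).tsum_eq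
    (fun μ => (∏ j, ((μ.1 j).factorial : ℂ))⁻¹ * det (of fun i j => a i ^ μ.1 j) *
      det (of fun i j => b i ^ μ.1 j)), ← det_exp_eq_tsum_strictAnti, div_mul_eq_mul_div]

/-- For pairwise distinct `a_i` and `b_j`:
`Σ_{ℓ(λ)≤N} (1/(N)_λ) s_λ(a) s_λ(b) = (∏_{k=1}^{N-1} k!) det(e^{a_i b_j})/(Δ(a)Δ(b))`,
where `(N)_λ = ∏_{(i,j)∈λ}(N-i+j)` and `s_λ` is given by the bialternant formula. -/
theorem stmt6 (N : ℕ) (a b : Fin N → ℂ)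
    (ha : Function.Injective a) (hb : Function.Injective b) :
    (∑' lam : {f : Fin N → ℕ // Antitone f},
        (∏ i : Fin N, ∏ j ∈ range (lam.1 i), ((N : ℂ) + (j : ℂ) - ((i : ℕ) : ℂ)))⁻¹ *
          (Matrix.det (Matrix.of fun i j : Fin N => a i ^ (lam.1 j + (N - 1 - (j : ℕ)))) /
            ∏ i : Fin N, ∏ j ∈ Finset.univ.filter (fun j => i < j), (a i - a j)) *
          (Matrix.det (Matrix.of fun i j : Fin N => b i ^ (lam.1 j + (N - 1 - (j : ℕ)))) /
            ∏ i : Fin N, ∏ j ∈ Finset.univ.filter (fun j => i < j), (b i - b j))) =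
      (∏ k ∈ range N, (Nat.factorial k : ℂ)) *
        Matrix.det (Matrix.of fun i j : Fin N => Complex.exp (a i * b j)) /
        ((∏ i : Fin N, ∏ j ∈ Finset.univ.filter (fun j => i < j), (a i - a j)) *
          ∏ i : Fin N, ∏ j ∈ Finset.univ.filter (fun j => i < j), (b i - b j)) :=
  stmt6_general N a b
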